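/- arXiv:1806.03284 — 3 statements merged into one kernel-verified Lean document; each statement's English description precedes it below -/
import Mathlib

section
/- Let α be irrational with denominators q_m, and suppose q_{i_{l+1}} ≥ q_{i_l}^3 for indices i_l < i_{l+1}. Let I = B(c, q_{i_l}^{-2}) ⊂ ℝ/ℤ be an interval of radius q_{i_l}^{-2}. Then for any x ∈ ℝ/ℤ there exists an integer j with 0 < j < q_{i_{l+1}} such that x + jα ∈ I. (Assume q_{i_l} ≥ 2.) -/
/-!
Let `P/Q` be the convergent of `α` with denominator `Q = q_{i_{l+1}}`. Its numerator and
denominator are coprime integers, so the multiples `j • (P/Q)`, `0 < j < Q`, run through all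
nonzero points of `(1/Q)ℤ/ℤ` and come within `1/Q` of every point of the circle. Since
`|α - P/Q| ≤ 1/Q²`, the orbit point `j • α` is within `j/Q² < 1/Q` of `j • (P/Q)`. Hence the first
`Q` orbit points are `2/Q`-dense, and `2/Q ≤ q_{i_l}⁻²` because `Q ≥ q_{i_l}³ ≥ 2 q_{i_l}²`.
-/

namespace GenContFract

open GenContFract (of)

variable {K : Type*} [Field K] [LinearOrder K] [FloorRing K]

theorem exists_int_contsAux_eq (v : K) (n : ℕ) :
    ∃ p q : ℤ, (of v).contsAux n = ⟨(p : K), (q : K)⟩ := by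
  induction n using Nat.strong_induction_on with
  | _ n IH =>
  rcases n with _ | _ | n
  · exact ⟨1, 0, by simp [contsAux]⟩
  · exact ⟨⌊v⌋, 1, by simp [contsAux, of_h_eq_floor]⟩
  · obtain ⟨p₁, q₁, h₁⟩ := IH (n + 1) (by omega)
    rcases hs : (of v).s.get? n with _ | gp
    · exact ⟨p₁, q₁, by rw [contsAux_stable_of_terminated (n + 1).le_succ hs, h₁]⟩
    · obtain ⟨p₀, q₀, h₀⟩ := IH n (by omega)
      obtain ⟨ha, z, hz⟩ := of_partNum_eq_one_and_exists_int_partDen_eq hs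
      refine ⟨z * p₁ + p₀, z * q₁ + q₀, ?_⟩
      rw [contsAux_recurrence hs h₀ h₁, ha, hz]
      simp

theorem exists_int_nums_dens_eq (v : K) (n : ℕ) :
    ∃ p q : ℤ, (of v).nums n = p ∧ (of v).dens n = q := by
  obtain ⟨p, q, h⟩ := exists_int_contsAux_eq v (n + 1)
  exact ⟨p, q, by rw [num_eq_conts_a, nth_cont_eq_succ_nth_contAux, h],
    by rw [den_eq_conts_b, nth_cont_eq_succ_nth_contAux, h]⟩

theorem isCoprime_of_not_terminatedAt {v : K} {n : ℕ} (hn : ¬(of v).TerminatedAt n) {p q : ℤ}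
    (hp : (of v).nums n = p) (hq : (of v).dens n = q) : IsCoprime p q := by
  obtain ⟨p', q', hp', hq'⟩ := exists_int_nums_dens_eq v (n + 1)
  have hdet : p * q' - q * p' = (-1) ^ (n + 1) := by
    have := SimpContFract.determinant (s := SimpContFract.of v) hn
    exact_mod_cast (hp ▸ hq ▸ hp' ▸ hq' ▸ this : _)
  have hsq : ((-1 : ℤ) ^ (n + 1)) * (-1) ^ (n + 1) = 1 := by rw [← mul_pow]; norm_num
  exact ⟨(-1) ^ (n + 1) * q', -((-1) ^ (n + 1) * p'),
    by linear_combination (-1) ^ (n + 1) * hdet + hsq⟩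

theorem abs_sub_nums_div_dens_le [IsStrictOrderedRing K] {v : K} {n : ℕ}
    (hn : ¬(of v).TerminatedAt n) :
    |v - (of v).nums n / (of v).dens n| ≤ 1 / (of v).dens n ^ 2 := by
  have h := abs_sub_convs_le hn
  rw [conv_eq_num_div_den] at h
  rcases (zero_le_of_den (K := K) (v := v) (n := n)).eq_or_lt' with h0 | h0
  · simpa [h0] using h
  calc _ ≤ 1 / ((of v).dens n * (of v).dens (n + 1)) := h
    _ ≤ 1 / (of v).dens n ^ 2 := by rw [sq]; gcongr; exact of_den_mono

end GenContFract

theorem Int.exists_not_dvd_abs_sub_le_one {Q : ℤ} (hQ : 2 ≤ Q) (s : ℝ) :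
    ∃ n : ℤ, ¬Q ∣ n ∧ |s - n| ≤ 1 := by
  have hfl := Int.floor_le s
  have hfl' := Int.lt_floor_add_one s
  by_cases h : Q ∣ ⌊s⌋
  · refine ⟨⌊s⌋ + 1, fun h' ↦ ?_, abs_le.2 ⟨by push_cast; linarith, by push_cast; linarith⟩⟩
    have := Int.le_of_dvd one_pos ((Int.dvd_add_right h).1 h')
    omega
  · exact ⟨⌊s⌋, h, abs_le.2 ⟨by linarith, by linarith⟩⟩

theorem IsCoprime.exists_pos_lt_mul_modEq {P Q n : ℤ} (hcop : IsCoprime P Q) (hQ : 0 < Q)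
    (hn : ¬Q ∣ n) : ∃ j : ℤ, 0 < j ∧ j < Q ∧ j * P ≡ n [ZMOD Q] := by
  obtain ⟨u, v, huv⟩ := hcop
  have hj : n * u % Q * P ≡ n [ZMOD Q] :=
    calc n * u % Q * P ≡ n * u * P [ZMOD Q] := (Int.mod_modEq _ _).mul_right _
      _ = n + Q * (-(n * v)) := by linear_combination n * huv
      _ ≡ n [ZMOD Q] := Int.modEq_add_fac_self
  refine ⟨n * u % Q, ?_, Int.emod_lt_of_pos _ hQ, hj⟩
  refine (Int.emod_nonneg _ hQ.ne').lt_of_ne fun h0 ↦ hn ?_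
  rw [← h0, zero_mul] at hj
  exact Int.dvd_of_emod_eq_zero hj.symm

namespace AddCircle

theorem dist_coe_le_abs_sub {p : ℝ} (a b : ℝ) : dist (a : AddCircle p) b ≤ |a - b| := by
  rw [dist_eq_norm, ← coe_sub]
  exact QuotientAddGroup.norm_mk_le_norm

theorem exists_nsmul_div_dist_le {P Q : ℤ} (hcop : IsCoprime P Q) (hQ : 2 ≤ Q)
    (y : AddCircle (1 : ℝ)) :
    ∃ j : ℕ, 0 < j ∧ (j : ℤ) < Q ∧ dist (j • ((P / Q : ℝ) : AddCircle (1 : ℝ))) y ≤ 1 / Q := by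
  obtain ⟨t, rfl⟩ := QuotientAddGroup.mk_surjective y
  obtain ⟨n, hn, htn⟩ := Int.exists_not_dvd_abs_sub_le_one hQ (t * Q)
  obtain ⟨j, hj0, hjQ, hjn⟩ := hcop.exists_pos_lt_mul_modEq (by omega) hn
  obtain ⟨k, hk⟩ := hjn.dvd
  lift j to ℕ using hj0.le
  have hQ0 : (0 : ℝ) < Q := by exact_mod_cast (by omega : (0 : ℤ) < Q)
  have hjP : (j • ((P / Q : ℝ) : AddCircle (1 : ℝ))) = ((n / Q : ℝ) : AddCircle (1 : ℝ)) := by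
    have hk' : (j : ℝ) * (P / Q) = n / Q - k := by
      field_simp
      linear_combination (-1 : ℝ) * (by exact_mod_cast hk : (n : ℝ) - j * P = Q * k)
    have hk0 : ((k : ℝ) : AddCircle (1 : ℝ)) = 0 := (coe_eq_zero_iff 1).2 ⟨k, by simp⟩
    rw [← coe_nsmul, nsmul_eq_mul, hk', coe_sub, hk0, sub_zero]
  refine ⟨j, by exact_mod_cast hj0, hjQ, ?_⟩
  rw [hjP]
  calc _ ≤ |n / Q - t| := dist_coe_le_abs_sub _ _
    _ = |t * Q - n| / Q := by
        rw [abs_sub_comm, show t - n / Q = (t * Q - n) / Q by field_simp, abs_div, abs_of_pos hQ0]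
    _ ≤ 1 / Q := by gcongr

theorem exists_nsmul_dist_lt_of_abs_sub_le {α : ℝ} {P Q : ℤ} (hcop : IsCoprime P Q) (hQ : 2 ≤ Q)
    (happrox : |α - P / Q| ≤ 1 / (Q : ℝ) ^ 2) (x c : AddCircle (1 : ℝ)) :
    ∃ j : ℕ, 0 < j ∧ (j : ℤ) < Q ∧ dist (x + j • (α : AddCircle (1 : ℝ))) c < 2 / Q := by
  obtain ⟨j, hj0, hjQ, hjy⟩ := exists_nsmul_div_dist_le hcop hQ (c - x)
  have hQ0 : (0 : ℝ) < Q := by exact_mod_cast (by omega : (0 : ℤ) < Q)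
  have hjQ' : (j : ℝ) < Q := by exact_mod_cast hjQ
  have hjα : dist (j • (α : AddCircle (1 : ℝ))) (j • ((P / Q : ℝ) : AddCircle (1 : ℝ))) < 1 / Q :=
    calc _ ≤ |j * α - j * (P / Q)| := by
          simpa only [← coe_nsmul, nsmul_eq_mul] using dist_coe_le_abs_sub _ _
      _ = j * |α - P / Q| := by rw [← mul_sub, abs_mul, Nat.abs_cast]
      _ ≤ j * (1 / Q ^ 2) := by gcongr
      _ < Q * (1 / Q ^ 2) := by gcongr
      _ = 1 / Q := by field_simp
  refine ⟨j, hj0, hjQ, ?_⟩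
  calc dist (x + j • (α : AddCircle (1 : ℝ))) c = dist (j • (α : AddCircle (1 : ℝ))) (c - x) := by
        rw [dist_eq_norm, dist_eq_norm]; congr 1; abel
    _ ≤ _ + _ := dist_triangle _ _ _
    _ < 1 / Q + 1 / Q := add_lt_add_of_lt_of_le hjα hjy
    _ = 2 / Q := by ring

end AddCircle

theorem Irrational.not_terminatedAt {α : ℝ} (hα : Irrational α) (n : ℕ) :
    ¬(GenContFract.of α).TerminatedAt n := fun h ↦
  hα <| by
    obtain ⟨q, hq⟩ := (GenContFract.terminates_iff_rat α).1 ⟨n, h⟩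
    exact ⟨q, hq.symm⟩

theorem Irrational.exists_nsmul_mem_ball {α : ℝ} (hα : Irrational α) {n : ℕ}
    (hn : 2 ≤ (GenContFract.of α).dens n) (x c : AddCircle (1 : ℝ)) :
    ∃ j : ℕ, 0 < j ∧ (j : ℝ) < (GenContFract.of α).dens n ∧
      x + j • (α : AddCircle (1 : ℝ)) ∈ Metric.ball c (2 / (GenContFract.of α).dens n) := by
  obtain ⟨P, Q, hP, hQ⟩ := GenContFract.exists_int_nums_dens_eq α n
  have hcop := GenContFract.isCoprime_of_not_terminatedAt (hα.not_terminatedAt n) hP hQ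
  have happrox := GenContFract.abs_sub_nums_div_dens_le (hα.not_terminatedAt n)
  rw [hP, hQ] at happrox
  rw [hQ] at hn ⊢
  obtain ⟨j, hj0, hjQ, hdist⟩ :=
    AddCircle.exists_nsmul_dist_lt_of_abs_sub_le hcop (by exact_mod_cast hn) happrox x c
  exact ⟨j, hj0, by exact_mod_cast hjQ, hdist⟩

/-- If `q_{i_{l+1}} ≥ q_{i_l}³` (with `q_{i_l} ≥ 2`), then for any point `x` of `ℝ/ℤ` the orbit
of the rotation by `α` enters the ball `I = B(c, q_{i_l}⁻²)` at some time `0 < j < q_{i_{l+1}}`. -/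
theorem stmt4 (α : ℝ) (hα : Irrational α) (a b : ℕ)
    (hab : ((GenContFract.of α).dens a) ^ 3 ≤ (GenContFract.of α).dens b)
    (ha : (2 : ℝ) ≤ (GenContFract.of α).dens a)
    (c x : AddCircle (1 : ℝ)) :
    ∃ j : ℕ, 0 < j ∧ (j : ℝ) < (GenContFract.of α).dens b ∧
      x + j • (α : AddCircle (1 : ℝ)) ∈
        Metric.ball c (1 / ((GenContFract.of α).dens a) ^ 2) := by
  set qa := (GenContFract.of α).dens a
  set qb := (GenContFract.of α).dens b
  have hqa_sq : 2 * qa ^ 2 ≤ qb :=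
    calc 2 * qa ^ 2 ≤ qa * qa ^ 2 := by gcongr
      _ = qa ^ 3 := by ring
      _ ≤ qb := hab
  have hqb : 2 ≤ qb := by nlinarith
  obtain ⟨j, hj0, hjb, hball⟩ := hα.exists_nsmul_mem_ball hqb x c
  refine ⟨j, hj0, hjb, Metric.ball_subset_ball ?_ hball⟩
  rw [div_le_div_iff₀ (by positivity) (by positivity)]
  linarith
end

section
/- Let E₁, E₂ ∈ SL(2,ℝ) with e₁ = ‖E₁‖ > 1 and e₂ = ‖E₂‖ > 1, and let θ = s(E₂) − u(E₁) be the angle between the stable direction of E₂ and the unstable direction of E₁ (computed via polar decompositions E_j = R_{u_j} diag(e_j, e_j^{-1}) R_{π/2 − s_j}). Then ‖E₂E₁‖ ≥ c · e₁ e₂ |sin θ| for an absolute constant c > 0 (in fact one has the exact formula ‖E₂E₁‖² + ‖E₂E₁‖^{-2} expressible in e₁, e₂, θ yielding ‖E₂E₁‖ ≥ e₁ e₂ |sin θ| − e₁^{-1} e₂^{-1}). -/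
/-! Since `R_{π/2 - s₂} R_{u₁} = R_{π/2 - θ}`, the product `E₂E₁` sends the unit vector
`R_{s₁ - π/2} (1, 0)` to `R_{u₂} (e₁e₂ sin θ, e₁e₂⁻¹ cos θ)`, whose length is at least
`e₁e₂|sin θ|`. -/

open Matrix Real

/-- The operator norm (on `ℓ²`) of a `2 × 2` real matrix. -/
noncomputable def opNorm2 (A : Matrix (Fin 2) (Fin 2) ℝ) : ℝ :=
  ‖Matrix.toEuclideanCLM (𝕜 := ℝ) A‖

/-- The rotation matrix by angle `θ`. -/
noncomputable def rotMat (θ : ℝ) : Matrix (Fin 2) (Fin 2) ℝ :=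
  !![Real.cos θ, -Real.sin θ; Real.sin θ, Real.cos θ]

lemma rotMat_mul_rotMat (a b : ℝ) : rotMat a * rotMat b = rotMat (a + b) := by
  ext i j
  fin_cases i <;> fin_cases j <;>
    simp [rotMat, Matrix.mul_apply, Fin.sum_univ_two, cos_add, sin_add] <;> ring

lemma rotMat_zero : rotMat 0 = 1 := by
  ext i j; fin_cases i <;> fin_cases j <;> simp [rotMat]

lemma rotMat_mulVec (φ x y : ℝ) :
    rotMat φ *ᵥ ![x, y] = ![x * cos φ - y * sin φ, x * sin φ + y * cos φ] := by
  ext i; fin_cases i <;> simp [rotMat, Matrix.mulVec, dotProduct] <;> ring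

lemma diag_mulVec (a b x y : ℝ) :
    !![a, 0; 0, b] *ᵥ ![x, y] = ![a * x, b * y] := by
  ext i; fin_cases i <;> simp [Matrix.mulVec, dotProduct]

lemma norm_toLp_vec2 (x y : ℝ) : ‖WithLp.toLp 2 ![x, y]‖ = √(x ^ 2 + y ^ 2) := by
  simp [EuclideanSpace.norm_eq, Fin.sum_univ_two]

lemma norm_toLp_rotMat_mulVec (φ x y : ℝ) :
    ‖WithLp.toLp 2 (rotMat φ *ᵥ ![x, y])‖ = ‖WithLp.toLp 2 ![x, y]‖ := by
  rw [rotMat_mulVec, norm_toLp_vec2, norm_toLp_vec2]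
  congr 1
  linear_combination (x ^ 2 + y ^ 2) * sin_sq_add_cos_sq φ

lemma norm_toLp_mulVec_le_opNorm2 (A : Matrix (Fin 2) (Fin 2) ℝ) (v : Fin 2 → ℝ) :
    ‖WithLp.toLp 2 (A *ᵥ v)‖ ≤ opNorm2 A * ‖WithLp.toLp 2 v‖ := by
  rw [← Matrix.toEuclideanCLM_toLp]
  exact (Matrix.toEuclideanCLM (𝕜 := ℝ) A).le_opNorm _

lemma polar_mul_polar_mulVec (a₁ b₁ a₂ b₂ u₁ s₁ u₂ s₂ : ℝ) :
    ((rotMat u₂ * !![a₂, 0; 0, b₂] * rotMat (π / 2 - s₂)) *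
        (rotMat u₁ * !![a₁, 0; 0, b₁] * rotMat (π / 2 - s₁))) *ᵥ
      (rotMat (s₁ - π / 2) *ᵥ ![1, 0]) =
    rotMat u₂ *ᵥ ![a₁ * a₂ * sin (s₂ - u₁), a₁ * b₂ * cos (s₂ - u₁)] := by
  have hmid : rotMat (π / 2 - s₂) * rotMat u₁ = rotMat (π / 2 - (s₂ - u₁)) := by
    rw [rotMat_mul_rotMat]; ring_nf
  have hend : rotMat (π / 2 - s₁) * rotMat (s₁ - π / 2) = 1 := by
    rw [rotMat_mul_rotMat, sub_add_sub_cancel', sub_self, rotMat_zero]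
  calc _ = (rotMat u₂ * !![a₂, 0; 0, b₂] * (rotMat (π / 2 - s₂) * rotMat u₁) * !![a₁, 0; 0, b₁] *
          (rotMat (π / 2 - s₁) * rotMat (s₁ - π / 2))) *ᵥ ![1, 0] := by
        rw [Matrix.mulVec_mulVec]; simp only [Matrix.mul_assoc]
    _ = _ := by
      rw [hmid, hend, Matrix.mul_one]
      simp only [← Matrix.mulVec_mulVec, diag_mulVec, rotMat_mulVec, cos_pi_div_two_sub,
        sin_pi_div_two_sub]
      congr 2 <;> ring

lemma abs_mul_sin_le_opNorm2_polar_mul (a₁ b₁ a₂ b₂ u₁ s₁ u₂ s₂ : ℝ) :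
    |a₁ * a₂ * sin (s₂ - u₁)| ≤
      opNorm2 ((rotMat u₂ * !![a₂, 0; 0, b₂] * rotMat (π / 2 - s₂)) *
        (rotMat u₁ * !![a₁, 0; 0, b₁] * rotMat (π / 2 - s₁))) := by
  set M := (rotMat u₂ * !![a₂, 0; 0, b₂] * rotMat (π / 2 - s₂)) *
    (rotMat u₁ * !![a₁, 0; 0, b₁] * rotMat (π / 2 - s₁))
  set x := a₁ * a₂ * sin (s₂ - u₁)
  set y := a₁ * b₂ * cos (s₂ - u₁)
  have hv : ‖WithLp.toLp 2 (rotMat (s₁ - π / 2) *ᵥ ![1, 0])‖ = 1 := by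
    rw [norm_toLp_rotMat_mulVec, norm_toLp_vec2]; norm_num
  calc |x| = √(x ^ 2) := (sqrt_sq_eq_abs x).symm
    _ ≤ √(x ^ 2 + y ^ 2) := sqrt_le_sqrt (le_add_of_nonneg_right (sq_nonneg y))
    _ = ‖WithLp.toLp 2 (M *ᵥ (rotMat (s₁ - π / 2) *ᵥ ![1, 0]))‖ := by
      rw [polar_mul_polar_mulVec, norm_toLp_rotMat_mulVec, norm_toLp_vec2]
    _ ≤ opNorm2 M := by
      simpa only [hv, mul_one] using
        norm_toLp_mulVec_le_opNorm2 M (rotMat (s₁ - π / 2) *ᵥ ![1, 0])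

theorem stmt7_general (E₁ E₂ : Matrix (Fin 2) (Fin 2) ℝ)
    (e₁ e₂ u₁ s₁ u₂ s₂ θ : ℝ)
    (he₁1 : 1 < e₁) (he₂1 : 1 < e₂)
    (hE₁ : E₁ = rotMat u₁ * !![e₁, 0; 0, e₁⁻¹] * rotMat (π / 2 - s₁))
    (hE₂ : E₂ = rotMat u₂ * !![e₂, 0; 0, e₂⁻¹] * rotMat (π / 2 - s₂))
    (hθ : θ = s₂ - u₁) :
    e₁ * e₂ * |Real.sin θ| - e₁⁻¹ * e₂⁻¹ ≤ opNorm2 (E₂ * E₁) := by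
  subst hE₁ hE₂ hθ
  have hbound := abs_mul_sin_le_opNorm2_polar_mul e₁ e₁⁻¹ e₂ e₂⁻¹ u₁ s₁ u₂ s₂
  rw [abs_mul, abs_of_pos (by positivity : 0 < e₁ * e₂)] at hbound
  have hinv : 0 < e₁⁻¹ * e₂⁻¹ := by positivity
  linarith

/-- If `E₁, E₂ ∈ SL(2,ℝ)` have norms `e₁, e₂ > 1` and polar decompositions
`Eⱼ = R_{uⱼ} diag(eⱼ, eⱼ⁻¹) R_{π/2 − sⱼ}`, then with `θ = s₂ − u₁` one has
`‖E₂E₁‖ ≥ e₁ e₂ |sin θ| − e₁⁻¹ e₂⁻¹`. -/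
theorem stmt7 (E₁ E₂ : Matrix (Fin 2) (Fin 2) ℝ)
    (hdet₁ : E₁.det = 1) (hdet₂ : E₂.det = 1)
    (e₁ e₂ u₁ s₁ u₂ s₂ θ : ℝ)
    (he₁ : e₁ = opNorm2 E₁) (he₂ : e₂ = opNorm2 E₂)
    (he₁1 : 1 < e₁) (he₂1 : 1 < e₂)
    (hE₁ : E₁ = rotMat u₁ * !![e₁, 0; 0, e₁⁻¹] * rotMat (π / 2 - s₁))
    (hE₂ : E₂ = rotMat u₂ * !![e₂, 0; 0, e₂⁻¹] * rotMat (π / 2 - s₂))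
    (hθ : θ = s₂ - u₁) :
    e₁ * e₂ * |Real.sin θ| - e₁⁻¹ * e₂⁻¹ ≤ opNorm2 (E₂ * E₁) :=
  stmt7_general E₁ E₂ e₁ e₂ u₁ s₁ u₂ s₂ θ he₁1 he₂1 hE₁ hE₂ hθ
end

section
/- Let L: ℝ → ℝ and suppose for each n₁ large enough there are functions L_{n₁}, L_{2n₁} such that: (i) |L(E) + L_{n₁}(E) − L_{2n₁}(E)| ≤ C λ^{−c n₁} for all E, and (ii) |L_{n₁}(E) − L_{n₁}(E')| ≤ (Cλ)^{n₁}|E − E'| and |L_{2n₁}(E) − L_{2n₁}(E')| ≤ (Cλ)^{2n₁}|E − E'|. Then choosing n₁ = −log|E−E'|/(4 log λ) yields |L(E) − L(E')| ≤ C' |E − E'|^{σ} for some σ > 0 independent of λ, for all E, E' with |E−E'| sufficiently small. -/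
/-!
Approximating `L` at scale `n` by `L_{2n} − L_n` costs `2Cλ^{−cn}`, while the two finite-scale
functions together move by at most `2K^{2n}|E − E'|` with `K = max (Cλ) λ`. Taking
`n = −log|E − E'| / (4 log K)` makes `K^{2n}|E − E'| = |E − E'|^{1/2}` and
`λ^{−cn} = |E − E'|^τ` with `τ = c log λ / (4 log K)`, so `L` is Hölder with exponent
`min (1/2) τ`.
-/

open Real

lemma abs_sub_le_of_add_sub_approx (L A B : ℝ → ℝ) (E E' : ℝ) :
    |L E - L E'| ≤
      |B E - B E'| + |A E - A E'| + |L E + A E - B E| + |L E' + A E' - B E'| := by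
  rw [abs_le]
  constructor <;>
    linarith [le_abs_self (B E - B E'), neg_abs_le (B E - B E'), le_abs_self (A E - A E'),
      neg_abs_le (A E - A E'), le_abs_self (L E + A E - B E), neg_abs_le (L E + A E - B E),
      le_abs_self (L E' + A E' - B E'), neg_abs_le (L E' + A E' - B E')]

lemma abs_sub_le_of_two_scale {M K η n : ℝ} {L A B : ℝ → ℝ}
    (happrox : ∀ E, |L E + A E - B E| ≤ η)
    (hA : ∀ E E', |A E - A E'| ≤ M ^ n * |E - E'|)
    (hB : ∀ E E', |B E - B E'| ≤ M ^ (2 * n) * |E - E'|)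
    (hM : 0 ≤ M) (hMK : M ≤ K) (hK : 1 ≤ K) (hn : 0 ≤ n) (E E' : ℝ) :
    |L E - L E'| ≤ 2 * K ^ (2 * n) * |E - E'| + 2 * η := by
  have hAK : M ^ n ≤ K ^ (2 * n) :=
    (rpow_le_rpow hM hMK hn).trans (rpow_le_rpow_of_exponent_le hK (by linarith))
  have hBK : M ^ (2 * n) ≤ K ^ (2 * n) := rpow_le_rpow hM hMK (by linarith)
  calc |L E - L E'|
      ≤ |B E - B E'| + |A E - A E'| + |L E + A E - B E| + |L E' + A E' - B E'| :=
        abs_sub_le_of_add_sub_approx L A B E E'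
    _ ≤ M ^ (2 * n) * |E - E'| + M ^ n * |E - E'| + η + η := by
        gcongr <;> solve_by_elim
    _ ≤ K ^ (2 * n) * |E - E'| + K ^ (2 * n) * |E - E'| + η + η := by gcongr
    _ = 2 * K ^ (2 * n) * |E - E'| + 2 * η := by ring

lemma rpow_eq_rpow_of_mul_log_eq {b d x y : ℝ} (hb : 0 < b) (hd : 0 < d)
    (h : x * log b = y * log d) : b ^ x = d ^ y := by
  rw [rpow_def_of_pos hb, rpow_def_of_pos hd, mul_comm (log b), mul_comm (log d), h]

lemma le_neg_log_div_of_lt_exp {a N δ : ℝ} (ha : 0 < a) (hδ : 0 < δ)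
    (h : δ < exp (-(a * N))) : N ≤ -log δ / a := by
  rw [le_div_iff₀ ha]
  linarith [log_exp (-(a * N)) ▸ log_lt_log hδ h]

lemma two_scale_bound_le_rpow {K lam c C δ : ℝ} (hK : 1 < K) (hlam : 1 < lam) (hC : 0 ≤ C)
    (hδ0 : 0 < δ) (hδ1 : δ < 1) :
    2 * K ^ (2 * (-log δ / (4 * log K))) * δ + 2 * (C * lam ^ (-(c * (-log δ / (4 * log K)))))
      ≤ (2 + 2 * C) * δ ^ min (1 / 2) (c * log lam / (4 * log K)) := by
  have hlogK : log K ≠ 0 := (log_pos hK).ne'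
  set τ := c * log lam / (4 * log K)
  have hKn : K ^ (2 * (-log δ / (4 * log K))) = δ ^ (-(1 / 2) : ℝ) :=
    rpow_eq_rpow_of_mul_log_eq (by positivity) hδ0 (by field_simp; ring)
  have hlamn : lam ^ (-(c * (-log δ / (4 * log K)))) = δ ^ τ :=
    rpow_eq_rpow_of_mul_log_eq (by positivity) hδ0 (by simp only [τ]; field_simp)
  have hsqrt : δ ^ (-(1 / 2) : ℝ) * δ = δ ^ (1 / 2 : ℝ) := by
    rw [← rpow_add_one hδ0.ne']; norm_num
  have h1 := rpow_le_rpow_of_exponent_ge hδ0 hδ1.le (min_le_left (1 / 2) τ)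
  have h2 := rpow_le_rpow_of_exponent_ge hδ0 hδ1.le (min_le_right (1 / 2) τ)
  rw [hKn, hlamn, mul_assoc 2, hsqrt]
  nlinarith

/-- If `|L(E) + L_{n₁}(E) − L_{2n₁}(E)| ≤ C λ^{−c n₁}` for all large scales `n₁`, and the
finite-scale functions `L_n` are Lipschitz with constant `(Cλ)ⁿ`, then (optimizing over
`n₁ = −log|E−E'|/(4 log λ)`) the function `L` is Hölder continuous with some exponent `σ > 0`
for all pairs of sufficiently close points. -/
theorem stmt13 (lam C c : ℝ) (hlam : 1 < lam) (hC : 0 < C) (hc : 0 < c)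
    (L : ℝ → ℝ) (Ln : ℝ → ℝ → ℝ) (N₀ : ℝ)
    (happrox : ∀ n : ℝ, N₀ ≤ n → ∀ E : ℝ,
      |L E + Ln n E - Ln (2 * n) E| ≤ C * lam ^ (-(c * n)))
    (hlip : ∀ n : ℝ, N₀ ≤ n → ∀ E E' : ℝ,
      |Ln n E - Ln n E'| ≤ (C * lam) ^ n * |E - E'| ∧
      |Ln (2 * n) E - Ln (2 * n) E'| ≤ (C * lam) ^ (2 * n) * |E - E'|) :
    ∃ σ : ℝ, 0 < σ ∧ ∃ C' : ℝ, 0 < C' ∧ ∃ ε : ℝ, 0 < ε ∧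
      ∀ E E' : ℝ, 0 < |E - E'| → |E - E'| < ε →
        |L E - L E'| ≤ C' * |E - E'| ^ σ := by
  set K := max (C * lam) lam
  have hK1 : 1 < K := hlam.trans_le (le_max_right _ _)
  have hlogK : 0 < log K := log_pos hK1
  set N := max N₀ 0
  have hτ : 0 < c * log lam / (4 * log K) := by have := log_pos hlam; positivity
  refine ⟨_, lt_min one_half_pos hτ, 2 + 2 * C, by positivity,
    exp (-(4 * log K * N)), exp_pos _, fun E E' hδ0 hδε => ?_⟩
  have hδ1 : |E - E'| < 1 :=
    hδε.trans_le (exp_le_one_iff.2 (by have : 0 ≤ N := le_max_right _ _; nlinarith))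
  set n := -log |E - E'| / (4 * log K)
  have hNn : N ≤ n := le_neg_log_div_of_lt_exp (by positivity) hδ0 hδε
  have hnN₀ : N₀ ≤ n := (le_max_left _ _).trans hNn
  calc |L E - L E'|
      ≤ 2 * K ^ (2 * n) * |E - E'| + 2 * (C * lam ^ (-(c * n))) :=
        abs_sub_le_of_two_scale (happrox n hnN₀) (fun E E' => (hlip n hnN₀ E E').1)
          (fun E E' => (hlip n hnN₀ E E').2) (by positivity) (le_max_left _ _) hK1.le
          ((le_max_right _ _).trans hNn) E E'
    _ ≤ _ := two_scale_bound_le_rpow hK1 hlam hC.le hδ0 hδ1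
end
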